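/- For every n ∈ ℕ, SL_n(A(p)) = E_n(A(p)): every n×n matrix M over A(p) with determinant equal to the identity ε is a finite product of elementary matrices, i.e., of matrices of the form I_n + α·e_{ij} with i ≠ j and α ∈ A(p), where e_{ij} is the matrix with entry ε in position (i,j) and 0 elsewhere (I_n being the identity matrix with ε on the diagonal). -/

import Mathlib

open scoped BigOperators

/-- `Complex.abs` was removed from Mathlib; restored with its old meaning `z ↦ ‖z‖`. -/
noncomputable def Complex.abs : AbsoluteValue ℂ ℝ where
  toFun z := ‖z‖
  map_mul' := norm_mul
  nonneg' := norm_nonneg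
  eq_zero' _ := norm_eq_zero
  add_le' := norm_add_le

theorem Complex.abs_ofReal (r : ℝ) : Complex.abs (r : ℂ) = |r| := by
  show ‖(r : ℂ)‖ = |r|
  rw [Complex.norm_real, Real.norm_eq_abs]

theorem Complex.norm_eq_abs (z : ℂ) : ‖z‖ = Complex.abs z := rfl

/-- A weight: a sequence of positive reals. -/
structure GoodWeight : Type where
  p : ℕ → ℝ
  pos : ∀ n, 0 < p n

namespace GoodWeight

/-- The growth condition `lim_{n→∞} p(n)^(1/n) = ∞`. -/
def Grows (w : GoodWeight) : Prop :=
  Filter.Tendsto (fun n : ℕ => w.p n ^ ((n : ℝ)⁻¹)) Filter.atTop Filter.atTop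

/-- The Banach algebra `A(p)`, in its sequence model: a sequence `a : ℕ → ℂ` (the
Taylor coefficients at `0` of the corresponding entire function) such that
`sup_n p(n)|a(n)| < ∞`. -/
def Ap (w : GoodWeight) : Type :=
  {a : ℕ → ℂ // ∃ C : ℝ, ∀ n, w.p n * Complex.abs (a n) ≤ C}

namespace Ap

variable {w : GoodWeight}

instance : Zero w.Ap :=
  ⟨⟨fun _ => 0, 0, fun n => by simp⟩⟩

instance : Add w.Ap :=
  ⟨fun a b =>
    ⟨fun n => a.1 n + b.1 n, by
      obtain ⟨C, hC⟩ := a.2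
      obtain ⟨D, hD⟩ := b.2
      refine ⟨C + D, fun n => ?_⟩
      have h1 : Complex.abs (a.1 n + b.1 n) ≤ Complex.abs (a.1 n) + Complex.abs (b.1 n) :=
        Complex.abs.add_le _ _
      calc w.p n * Complex.abs (a.1 n + b.1 n)
          ≤ w.p n * Complex.abs (a.1 n) + w.p n * Complex.abs (b.1 n) := by
            rw [← mul_add]; exact mul_le_mul_of_nonneg_left h1 (w.pos n).le
        _ ≤ C + D := add_le_add (hC n) (hD n)⟩⟩

instance : Neg w.Ap :=
  ⟨fun a =>
    ⟨fun n => -a.1 n, by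
      obtain ⟨C, hC⟩ := a.2
      exact ⟨C, fun n => by simpa using hC n⟩⟩⟩

/-- The weighted Hadamard multiplication `(f ∗ g)(n) = p(n) f̂(n) ĝ(n)`. -/
instance : Mul w.Ap :=
  ⟨fun a b =>
    ⟨fun n => (w.p n : ℂ) * a.1 n * b.1 n, by
      obtain ⟨C, hC⟩ := a.2
      obtain ⟨D, hD⟩ := b.2
      refine ⟨C * D, fun n => ?_⟩
      have e : w.p n * Complex.abs ((w.p n : ℂ) * a.1 n * b.1 n)
          = (w.p n * Complex.abs (a.1 n)) * (w.p n * Complex.abs (b.1 n)) := by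
        rw [map_mul, map_mul, Complex.abs_ofReal, abs_of_pos (w.pos n)]; ring
      rw [e]
      have h0C : (0:ℝ) ≤ C :=
        le_trans (mul_nonneg (w.pos 0).le (Complex.abs.nonneg _)) (hC 0)
      exact mul_le_mul (hC n) (hD n) (mul_nonneg (w.pos n).le (Complex.abs.nonneg _)) h0C⟩⟩

/-- The identity element `ε`, with coefficients `1/p(n)`. -/
noncomputable instance : One w.Ap :=
  ⟨⟨fun n => ((w.p n : ℂ))⁻¹, 1, fun n => by
      rw [map_inv₀, Complex.abs_ofReal, abs_of_pos (w.pos n),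
        mul_inv_cancel₀ (w.pos n).ne']⟩⟩

instance : SMul ℂ w.Ap :=
  ⟨fun c a =>
    ⟨fun n => c * a.1 n, by
      obtain ⟨C, hC⟩ := a.2
      refine ⟨Complex.abs c * C, fun n => ?_⟩
      rw [map_mul]
      calc w.p n * (Complex.abs c * Complex.abs (a.1 n))
          = Complex.abs c * (w.p n * Complex.abs (a.1 n)) := by ring
        _ ≤ Complex.abs c * C := mul_le_mul_of_nonneg_left (hC n) (Complex.abs.nonneg c)⟩⟩

noncomputable instance : CommRing w.Ap where
  add := (· + ·)
  add_assoc a b c := Subtype.ext (funext fun n => add_assoc _ _ _)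
  zero := 0
  zero_add a := Subtype.ext (funext fun n => zero_add _)
  add_zero a := Subtype.ext (funext fun n => add_zero _)
  add_comm a b := Subtype.ext (funext fun n => add_comm _ _)
  nsmul := nsmulRec
  zsmul := zsmulRec
  mul := (· * ·)
  mul_assoc a b c := Subtype.ext (funext fun n => by
    show (w.p n : ℂ) * ((w.p n : ℂ) * a.1 n * b.1 n) * c.1 n
        = (w.p n : ℂ) * a.1 n * ((w.p n : ℂ) * b.1 n * c.1 n)
    ring)
  one := 1
  one_mul a := Subtype.ext (funext fun n => by
    show (w.p n : ℂ) * ((w.p n : ℂ))⁻¹ * a.1 n = a.1 n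
    have h : ((w.p n : ℝ) : ℂ) ≠ 0 := by exact_mod_cast (w.pos n).ne'
    rw [mul_inv_cancel₀ h, one_mul])
  mul_one a := Subtype.ext (funext fun n => by
    show (w.p n : ℂ) * a.1 n * ((w.p n : ℂ))⁻¹ = a.1 n
    have h : ((w.p n : ℝ) : ℂ) ≠ 0 := by exact_mod_cast (w.pos n).ne'
    field_simp)
  left_distrib a b c := Subtype.ext (funext fun n => by
    show (w.p n : ℂ) * a.1 n * (b.1 n + c.1 n)
        = (w.p n : ℂ) * a.1 n * b.1 n + (w.p n : ℂ) * a.1 n * c.1 n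
    ring)
  right_distrib a b c := Subtype.ext (funext fun n => by
    show (w.p n : ℂ) * (a.1 n + b.1 n) * c.1 n
        = (w.p n : ℂ) * a.1 n * c.1 n + (w.p n : ℂ) * b.1 n * c.1 n
    ring)
  zero_mul a := Subtype.ext (funext fun n => by
    show (w.p n : ℂ) * 0 * a.1 n = 0
    ring)
  mul_zero a := Subtype.ext (funext fun n => by
    show (w.p n : ℂ) * a.1 n * 0 = 0
    ring)
  mul_comm a b := Subtype.ext (funext fun n => by
    show (w.p n : ℂ) * a.1 n * b.1 n = (w.p n : ℂ) * b.1 n * a.1 n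
    ring)
  neg := Neg.neg
  neg_add_cancel a := Subtype.ext (funext fun n => neg_add_cancel _)

instance : Module ℂ w.Ap where
  smul := (· • ·)
  one_smul a := Subtype.ext (funext fun n => by
    show (1 : ℂ) * a.1 n = a.1 n
    ring)
  mul_smul c d a := Subtype.ext (funext fun n => by
    show (c * d) * a.1 n = c * (d * a.1 n)
    ring)
  smul_zero c := Subtype.ext (funext fun n => by
    show c * 0 = 0
    ring)
  smul_add c a b := Subtype.ext (funext fun n => by
    show c * (a.1 n + b.1 n) = c * a.1 n + c * b.1 n
    ring)
  add_smul c d a := Subtype.ext (funext fun n => by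
    show (c + d) * a.1 n = c * a.1 n + d * a.1 n
    ring)
  zero_smul a := Subtype.ext (funext fun n => by
    show (0 : ℂ) * a.1 n = 0
    ring)

noncomputable instance : Algebra ℂ w.Ap :=
  Algebra.ofModule
    (fun c a b => Subtype.ext (funext fun n => by
      show (w.p n : ℂ) * (c * a.1 n) * b.1 n = c * ((w.p n : ℂ) * a.1 n * b.1 n)
      ring))
    (fun c a b => Subtype.ext (funext fun n => by
      show (w.p n : ℂ) * a.1 n * (c * b.1 n) = c * ((w.p n : ℂ) * a.1 n * b.1 n)
      ring))

theorem bddAbove (a : w.Ap) :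
    BddAbove (Set.range fun n => w.p n * Complex.abs (a.1 n)) := by
  obtain ⟨C, hC⟩ := a.2
  exact ⟨C, by rintro x ⟨k, rfl⟩; exact hC k⟩

/-- The norm `‖f‖ = sup_n p(n) |f̂(n)|`, as an `AddGroupNorm`. -/
noncomputable def gnorm (w : GoodWeight) : AddGroupNorm w.Ap where
  toFun a := ⨆ n, w.p n * Complex.abs (a.1 n)
  map_zero' := by
    have h : ∀ n : ℕ, w.p n * Complex.abs ((0 : w.Ap).1 n) = 0 := fun n => by
      show w.p n * Complex.abs 0 = 0; simp
    simp [h]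
  add_le' a b := by
    apply ciSup_le
    intro n
    have h1 : Complex.abs (a.1 n + b.1 n) ≤ Complex.abs (a.1 n) + Complex.abs (b.1 n) :=
      Complex.abs.add_le _ _
    calc w.p n * Complex.abs ((a + b).1 n)
        ≤ w.p n * Complex.abs (a.1 n) + w.p n * Complex.abs (b.1 n) := by
          rw [← mul_add]; exact mul_le_mul_of_nonneg_left h1 (w.pos n).le
      _ ≤ (⨆ k, w.p k * Complex.abs (a.1 k)) + ⨆ k, w.p k * Complex.abs (b.1 k) :=
          add_le_add (le_ciSup (bddAbove a) n) (le_ciSup (bddAbove b) n)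
  neg' a := by
    have h : (fun n => w.p n * Complex.abs ((-a).1 n))
        = fun n => w.p n * Complex.abs (a.1 n) := by
      funext n
      show w.p n * Complex.abs (-a.1 n) = w.p n * Complex.abs (a.1 n)
      rw [AbsoluteValue.map_neg]
    show (⨆ n, w.p n * Complex.abs ((-a).1 n)) = ⨆ n, w.p n * Complex.abs (a.1 n)
    rw [h]
  eq_zero_of_map_eq_zero' a h := by
    apply Subtype.ext
    funext n
    have h1 : w.p n * Complex.abs (a.1 n) ≤ 0 := h ▸ le_ciSup (bddAbove a) n
    have h2 : (0:ℝ) ≤ w.p n * Complex.abs (a.1 n) :=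
      mul_nonneg (w.pos n).le (Complex.abs.nonneg _)
    have h3 : Complex.abs (a.1 n) = 0 := by
      rcases mul_eq_zero.mp (le_antisymm h1 h2) with h' | h'
      · exact absurd h' (w.pos n).ne'
      · exact h'
    exact Complex.abs.eq_zero.mp h3

noncomputable instance : NormedAddCommGroup w.Ap :=
  (gnorm w).toNormedAddCommGroup

theorem norm_def (a : w.Ap) : ‖a‖ = ⨆ n, w.p n * Complex.abs (a.1 n) := rfl

theorem le_norm (a : w.Ap) (n : ℕ) : w.p n * Complex.abs (a.1 n) ≤ ‖a‖ :=
  le_ciSup (bddAbove a) n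

theorem norm_nonneg' (a : w.Ap) : 0 ≤ ‖a‖ :=
  le_trans (mul_nonneg (w.pos 0).le (Complex.abs.nonneg _)) (le_norm a 0)

noncomputable instance : NormedCommRing w.Ap :=
  { (inferInstance : NormedAddCommGroup w.Ap), (inferInstance : CommRing w.Ap) with
    norm_mul_le := by
      intro a b
      apply ciSup_le
      intro n
      have e : w.p n * Complex.abs ((a * b).1 n)
          = (w.p n * Complex.abs (a.1 n)) * (w.p n * Complex.abs (b.1 n)) := by
        show w.p n * Complex.abs ((w.p n : ℂ) * a.1 n * b.1 n) = _
        rw [map_mul, map_mul, Complex.abs_ofReal, abs_of_pos (w.pos n)]; ring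
      rw [e]
      exact mul_le_mul (le_norm a n) (le_norm b n)
        (mul_nonneg (w.pos n).le (Complex.abs.nonneg _)) (norm_nonneg' a) }

noncomputable instance : NormedSpace ℂ w.Ap where
  norm_smul_le c a := by
    apply ciSup_le
    intro n
    have e : w.p n * Complex.abs ((c • a).1 n)
        = Complex.abs c * (w.p n * Complex.abs (a.1 n)) := by
      show w.p n * Complex.abs (c * a.1 n) = _
      rw [map_mul]; ring
    rw [e]
    calc Complex.abs c * (w.p n * Complex.abs (a.1 n))
        ≤ Complex.abs c * ‖a‖ := mul_le_mul_of_nonneg_left (le_norm a n) (Complex.abs.nonneg c)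
      _ = ‖c‖ * ‖a‖ := by rw [Complex.norm_eq_abs]

noncomputable instance : NormedAlgebra ℂ w.Ap :=
  { (inferInstance : Algebra ℂ w.Ap) with
    norm_smul_le := fun c a => norm_smul_le c a }

end Ap

end GoodWeight

/-!
The map `f ↦ (p(n) f̂(n))ₙ` turns the weighted Hadamard product into the pointwise product, so
`A(p)` is isomorphic to the ring `ℓ^∞` of bounded complex sequences. This ring has Bass stable
range one: if `u a + v b = 1`, then at every index `|a|` or `|b|` is at least some fixed `δ > 0`,
so a bounded `c` can be chosen with `a + c b` bounded away from `0`, i.e. a unit.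

Over a commutative ring of stable range one, `SL_n = E_n` by induction on `n`. The last column of
`M ∈ SL_n` is unimodular (the last row of the adjugate is a witness), so row operations turn its
corner entry into a unit `u`; two more transvections, through any other row, turn `u` into `1`.
A matrix with corner entry `1` factors as (upper unipotent) · diag(S, 1) · (lower unipotent),
where the Schur complement `S` has determinant one and is handled by induction.
-/

def HasStableRangeOne (R : Type*) [CommRing R] : Prop :=
  ∀ a b : R, IsCoprime a b → ∃ c, IsUnit (a + c * b)

theorem HasStableRangeOne.of_ringEquiv {R S : Type*} [CommRing R] [CommRing S] (e : R ≃+* S)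
    (h : HasStableRangeOne S) : HasStableRangeOne R := by
  intro a b hab
  obtain ⟨c, hc⟩ := h (e a) (e b) (hab.map e.toRingHom)
  refine ⟨e.symm c, ?_⟩
  simpa using hc.map e.symm

namespace BoundedContinuousFunction

variable {α 𝕜 : Type*} [TopologicalSpace α] [NormedField 𝕜]

theorem isUnit_of_le_norm [DiscreteTopology α] {f : α →ᵇ 𝕜} {δ : ℝ} (hδ : 0 < δ)
    (hf : ∀ t, δ ≤ ‖f t‖) : IsUnit f := by
  have hne : ∀ t, f t ≠ 0 := fun t h => by
    have := hf t
    rw [h, norm_zero] at this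
    linarith
  refine isUnit_iff_exists_inv.2
    ⟨ofNormedAddCommGroupDiscrete (fun t => (f t)⁻¹) δ⁻¹ fun t => ?_, ?_⟩
  · rw [norm_inv]
    exact inv_anti₀ hδ (hf t)
  · ext t
    simp [mul_inv_cancel₀ (hne t)]

theorem exists_pos_le_norm_or_le_norm_of_isCoprime {a b : α →ᵇ 𝕜} (hab : IsCoprime a b) :
    ∃ δ > 0, ∀ t, δ ≤ ‖a t‖ ∨ δ ≤ ‖b t‖ := by
  obtain ⟨u, v, huv⟩ := hab
  have hK : 0 < ‖u‖ + ‖v‖ + 1 := by positivity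
  refine ⟨(‖u‖ + ‖v‖ + 1)⁻¹, inv_pos.2 hK, fun t => ?_⟩
  by_contra! hlt
  have hle : (1 : ℝ) ≤ ‖u‖ * ‖a t‖ + ‖v‖ * ‖b t‖ := calc
    (1 : ℝ) = ‖u t * a t + v t * b t‖ := by
      rw [← mul_apply, ← mul_apply, ← add_apply, huv, coe_one, Pi.one_apply, norm_one]
    _ ≤ ‖u t‖ * ‖a t‖ + ‖v t‖ * ‖b t‖ := by
      rw [← norm_mul, ← norm_mul]
      exact norm_add_le _ _
    _ ≤ ‖u‖ * ‖a t‖ + ‖v‖ * ‖b t‖ := by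
      gcongr <;> exact norm_coe_le_norm _ t
  have hδ : (‖u‖ + ‖v‖ + 1)⁻¹ * (‖u‖ + ‖v‖ + 1) = 1 := inv_mul_cancel₀ hK.ne'
  have ha := mul_le_mul_of_nonneg_left hlt.1.le (norm_nonneg u)
  have hb := mul_le_mul_of_nonneg_left hlt.2.le (norm_nonneg v)
  nlinarith [inv_pos.2 hK]

theorem hasStableRangeOne [DiscreteTopology α] : HasStableRangeOne (α →ᵇ 𝕜) := by
  classical
  intro a b hab
  obtain ⟨δ, hδ, hab⟩ := exists_pos_le_norm_or_le_norm_of_isCoprime hab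
  -- where `a` is small, `b` is not, and `c` makes `a + c * b = 1`
  let c : α → 𝕜 := fun t => if ‖a t‖ < δ then (1 - a t) / b t else 0
  have hc : ∀ t, ‖c t‖ ≤ (1 + δ) / δ := fun t => by
    by_cases ht : ‖a t‖ < δ
    · simp only [c, if_pos ht, norm_div]
      refine div_le_div₀ (by positivity) ((norm_sub_le _ _).trans ?_) hδ
        ((hab t).resolve_left ht.not_ge)
      rw [norm_one]
      exact add_le_add_right ht.le 1
    · simp only [c, if_neg ht, norm_zero]
      positivity
  refine ⟨ofNormedAddCommGroupDiscrete c _ hc,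
    isUnit_of_le_norm (δ := min δ 1) (by positivity) fun t => ?_⟩
  by_cases ht : ‖a t‖ < δ
  · have hb : b t ≠ 0 := norm_pos_iff.1 (hδ.trans_le ((hab t).resolve_left ht.not_ge))
    simp [c, ht, div_mul_cancel₀ _ hb]
  · simp only [c, if_neg ht, add_apply, mul_apply, coe_ofNormedAddCommGroupDiscrete, zero_mul,
      add_zero]
    exact (min_le_left _ _).trans (not_lt.1 ht)

end BoundedContinuousFunction

namespace Matrix

variable (n : Type*) (R : Type*) [Fintype n] [DecidableEq n] [CommRing R]

def elementary : Submonoid (Matrix n n R) :=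
  Submonoid.closure {E | ∃ (i j : n) (c : R), i ≠ j ∧ E = transvection i j c}

variable {n R} {p : Type*} [Fintype p] [DecidableEq p]

theorem transvection_mem_elementary {i j : n} (h : i ≠ j) (c : R) :
    transvection i j c ∈ elementary n R :=
  Submonoid.subset_closure ⟨i, j, c, h, rfl⟩

theorem exists_mul_eq_one_of_mem_elementary {E : Matrix n n R} (hE : E ∈ elementary n R) :
    ∃ E' ∈ elementary n R, E' * E = 1 := by
  induction hE using Submonoid.closure_induction with
  | mem _ h =>
    obtain ⟨i, j, c, hij, rfl⟩ := h
    exact ⟨_, transvection_mem_elementary hij (-c), by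
      rw [transvection_mul_transvection_same _ _ hij, neg_add_cancel, transvection_zero]⟩
  | one => exact ⟨1, one_mem _, one_mul 1⟩
  | mul A B _ _ hA hB =>
    obtain ⟨A', hA', hA'A⟩ := hA
    obtain ⟨B', hB', hB'B⟩ := hB
    exact ⟨B' * A', mul_mem hB' hA', by
      rw [Matrix.mul_assoc, ← Matrix.mul_assoc A', hA'A, Matrix.one_mul, hB'B]⟩

theorem det_eq_one_of_mem_elementary {E : Matrix n n R} (hE : E ∈ elementary n R) :
    E.det = 1 := by
  induction hE using Submonoid.closure_induction with
  | mem _ h =>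
    obtain ⟨i, j, c, hij, rfl⟩ := h
    exact det_transvection_of_ne i j hij c
  | one => exact det_one
  | mul A B _ _ hA hB => rw [det_mul, hA, hB, one_mul]

theorem map_mem_elementary (f : Matrix n n R →* Matrix p p R)
    (hf : ∀ i j : n, i ≠ j → ∀ c : R, f (transvection i j c) ∈ elementary p R)
    {E : Matrix n n R} (hE : E ∈ elementary n R) : f E ∈ elementary p R := by
  suffices elementary n R ≤ (elementary p R).comap f from this hE
  refine Submonoid.closure_le.2 ?_
  rintro _ ⟨i, j, c, hij, rfl⟩
  exact hf i j hij c

theorem reindex_mem_elementary (e : n ≃ p) {E : Matrix n n R} (hE : E ∈ elementary n R) :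
    reindex e e E ∈ elementary p R := by
  refine map_mem_elementary (reindexAlgEquiv R R e : Matrix n n R →* Matrix p p R) ?_ hE
  intro i j hij c
  have h := TransvectionStruct.toMatrix_reindexEquiv e ⟨i, j, hij, c⟩
  simp only [TransvectionStruct.toMatrix_mk] at h
  change reindexAlgEquiv R R e (transvection i j c) ∈ _
  rw [← h]
  exact transvection_mem_elementary (e.injective.ne hij) c

theorem fromBlocks_zero_zero_one_mem_elementary {E : Matrix n n R} (hE : E ∈ elementary n R) :
    fromBlocks E 0 0 (1 : Matrix p p R) ∈ elementary (n ⊕ p) R := by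
  let f : Matrix n n R →* Matrix (n ⊕ p) (n ⊕ p) R :=
    { toFun := fun B => fromBlocks B 0 0 1
      map_one' := fromBlocks_one
      map_mul' := fun A B => by simp [fromBlocks_multiply] }
  refine map_mem_elementary f (fun i j hij c => ?_) hE
  have h := TransvectionStruct.toMatrix_sumInl p ⟨i, j, hij, c⟩
  simp only [TransvectionStruct.toMatrix_mk] at h
  change fromBlocks (transvection i j c) 0 0 1 ∈ _
  rw [← h]
  exact transvection_mem_elementary (Sum.inl_injective.ne hij) c

omit [Fintype n] [Fintype p] in
theorem fromBlocks_one_single_zero_one_eq_transvection (i : n) (j : p) (c : R) :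
    fromBlocks 1 (single i j c) 0 1 = transvection (Sum.inl i) (Sum.inr j) c := by
  ext (a | a) (b | b) <;> simp [transvection, single, one_apply]

theorem fromBlocks_one_upper_mem_elementary (B : Matrix n p R) :
    fromBlocks 1 B 0 1 ∈ elementary (n ⊕ p) R := by
  let P : Matrix n p R → Prop := fun B => fromBlocks 1 B 0 1 ∈ elementary (n ⊕ p) R
  have hadd : ∀ B B', P B → P B' → P (B + B') := fun B B' hB hB' => by
    convert mul_mem hB hB' using 1
    simp [fromBlocks_multiply, add_comm]
  have hzero : P 0 := by simp [P, one_mem]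
  rw [matrix_eq_sum_single B]
  refine Finset.sum_induction _ P hadd hzero fun i _ => Finset.sum_induction _ P hadd hzero
    fun j _ => ?_
  simp only [P, fromBlocks_one_single_zero_one_eq_transvection]
  exact transvection_mem_elementary Sum.inl_ne_inr _

theorem fromBlocks_one_lower_mem_elementary (C : Matrix p n R) :
    fromBlocks 1 0 C 1 ∈ elementary (n ⊕ p) R := by
  have h := reindex_mem_elementary (Equiv.sumComm p n) (fromBlocks_one_upper_mem_elementary C)
  simpa [reindex_apply, fromBlocks_submatrix_sum_swap_sum_swap] using h

omit [Fintype p] [DecidableEq p] in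
theorem exists_mem_elementary_mul_apply_eq_one {i k : n} (hik : i ≠ k) {N : Matrix n p R}
    {j : p} (hN : IsUnit (N k j)) : ∃ E ∈ elementary n R, (E * N) k j = 1 := by
  obtain ⟨u, hu⟩ := hN
  -- first make the entry in row `i` equal to `1`, then add `1 - u` times row `i` to row `k`
  refine ⟨transvection k i (1 - (u : R)) * transvection i k ((1 - N i j) * ↑u⁻¹),
    mul_mem (transvection_mem_elementary hik.symm _) (transvection_mem_elementary hik _), ?_⟩
  rw [Matrix.mul_assoc, transvection_mul_apply_same, transvection_mul_apply_same,
    transvection_mul_apply_of_ne _ _ _ _ hik.symm, ← hu]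
  linear_combination (1 - (u : R)) * (1 - N i j) * u.inv_mul

theorem exists_mem_elementary_isUnit_mul_apply_inr (hR : HasStableRangeOne R)
    (M : Matrix (n ⊕ Unit) (n ⊕ Unit) R) (hM : M.det = 1) :
    ∃ E ∈ elementary (n ⊕ Unit) R, IsUnit ((E * M) (Sum.inr ()) (Sum.inr ())) := by
  set q : n ⊕ Unit := Sum.inr ()
  have hcol : ∑ k, adjugate M q k * M k q = 1 := by
    simpa [hM, mul_apply] using congrFun (congrFun (adjugate_mul M) q) q
  rw [Fintype.sum_sum_type] at hcol
  obtain ⟨c, hc⟩ := hR (M q q) (∑ i, adjugate M q (Sum.inl i) * M (Sum.inl i) q)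
    ⟨adjugate M q q, 1, by simpa [q, add_comm, mul_comm] using hcol⟩
  refine ⟨fromBlocks 1 0 (of fun _ i => c * adjugate M q (Sum.inl i)) 1,
    fromBlocks_one_lower_mem_elementary _, ?_⟩
  convert hc using 1
  simp [q, mul_apply, Fintype.sum_sum_type, Finset.mul_sum, mul_assoc, add_comm]

theorem mem_elementary_of_apply_inr_eq_one
    (ih : ∀ S : Matrix n n R, S.det = 1 → S ∈ elementary n R)
    {N : Matrix (n ⊕ Unit) (n ⊕ Unit) R} (hdet : N.det = 1)
    (hN : N (Sum.inr ()) (Sum.inr ()) = 1) : N ∈ elementary (n ⊕ Unit) R := by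
  have hD : N.toBlocks₂₂ = 1 := by
    ext ⟨⟩ ⟨⟩
    exact hN
  have hLDU : N = fromBlocks 1 N.toBlocks₁₂ 0 1 *
      fromBlocks (N.toBlocks₁₁ - N.toBlocks₁₂ * N.toBlocks₂₁) 0 0 1 *
      fromBlocks 1 0 N.toBlocks₂₁ 1 := by
    conv_lhs => rw [← fromBlocks_toBlocks N, hD]
    have : Invertible (1 : Matrix Unit Unit R) := invertibleOne
    simpa using fromBlocks_eq_of_invertible₂₂ N.toBlocks₁₁ N.toBlocks₁₂ N.toBlocks₂₁ 1
  have hS : (N.toBlocks₁₁ - N.toBlocks₁₂ * N.toBlocks₂₁).det = 1 := by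
    rw [← hdet, ← det_fromBlocks_one₂₂, ← hD, fromBlocks_toBlocks]
  rw [hLDU]
  exact mul_mem (mul_mem (fromBlocks_one_upper_mem_elementary _)
    (fromBlocks_zero_zero_one_mem_elementary (ih _ hS)))
    (fromBlocks_one_lower_mem_elementary _)

theorem mem_elementary_sum_unit_of_det_eq_one (hR : HasStableRangeOne R) [Nonempty n]
    (ih : ∀ S : Matrix n n R, S.det = 1 → S ∈ elementary n R)
    {M : Matrix (n ⊕ Unit) (n ⊕ Unit) R} (hM : M.det = 1) :
    M ∈ elementary (n ⊕ Unit) R := by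
  obtain ⟨E₁, hE₁, hunit⟩ := exists_mem_elementary_isUnit_mul_apply_inr hR M hM
  obtain ⟨E₂, hE₂, hone⟩ := exists_mem_elementary_mul_apply_eq_one
    (Sum.inl_ne_inr (a := Classical.arbitrary n) (b := ())) hunit
  have hE : E₂ * E₁ ∈ elementary (n ⊕ Unit) R := mul_mem hE₂ hE₁
  obtain ⟨E', hE', hE'E⟩ := exists_mul_eq_one_of_mem_elementary hE
  have hN : E₂ * E₁ * M ∈ elementary (n ⊕ Unit) R := by
    refine mem_elementary_of_apply_inr_eq_one ih ?_ (by rwa [Matrix.mul_assoc])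
    rw [det_mul, det_eq_one_of_mem_elementary hE, hM, one_mul]
  simpa [← Matrix.mul_assoc, hE'E] using mul_mem hE' hN

theorem mem_elementary_of_det_eq_one (hR : HasStableRangeOne R) :
    ∀ {k : ℕ} {M : Matrix (Fin k) (Fin k) R}, M.det = 1 → M ∈ elementary (Fin k) R
  | 0, M, _ => by
    rw [Subsingleton.elim M 1]
    exact one_mem _
  | 1, M, hM => by
    rw [det_unique] at hM
    have h1 : M = 1 := by
      ext i j
      rw [Subsingleton.elim i default, Subsingleton.elim j default, hM, one_apply_eq]
    rw [h1]
    exact one_mem _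
  | k + 2, M, hM => by
    let e : Fin (k + 2) ≃ Fin (k + 1) ⊕ Unit := Fintype.equivOfCardEq (by simp)
    have h := reindex_mem_elementary e.symm <| mem_elementary_sum_unit_of_det_eq_one hR
      (fun S => mem_elementary_of_det_eq_one hR) (M := reindex e e M) (by rwa [det_reindex_self])
    simpa using h

end Matrix

open scoped BoundedContinuousFunction

namespace GoodWeight.Ap

noncomputable def equivBounded (w : GoodWeight) : w.Ap ≃+* (ℕ →ᵇ ℂ) where
  toFun a := .ofNormedAddCommGroupDiscrete (fun t => (w.p t : ℂ) * a.1 t) ‖a‖ fun t => by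
    rw [norm_mul, Complex.norm_real, Real.norm_of_nonneg (w.pos t).le]
    exact le_norm a t
  invFun f := ⟨fun t => f t / w.p t, ‖f‖, fun t => by
    rw [← Complex.norm_eq_abs, norm_div, Complex.norm_real, Real.norm_of_nonneg (w.pos t).le,
      mul_div_cancel₀ _ (w.pos t).ne']
    exact f.norm_coe_le_norm t⟩
  left_inv a := Subtype.ext <| funext fun t => by
    have : (w.p t : ℂ) ≠ 0 := Complex.ofReal_ne_zero.2 (w.pos t).ne'
    simp [this]
  right_inv f := by
    ext t
    have : (w.p t : ℂ) ≠ 0 := Complex.ofReal_ne_zero.2 (w.pos t).ne'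
    simp [mul_div_cancel₀ _ this]
  map_mul' a b := by
    ext t
    change (w.p t : ℂ) * ((w.p t : ℂ) * a.1 t * b.1 t) = (w.p t * a.1 t) * (w.p t * b.1 t)
    ring
  map_add' a b := by
    ext t
    change (w.p t : ℂ) * (a.1 t + b.1 t) = w.p t * a.1 t + w.p t * b.1 t
    ring

end GoodWeight.Ap

theorem sl_eq_elementary_general (w : GoodWeight) (n : ℕ)
    (M : Matrix (Fin n) (Fin n) w.Ap) (hM : M.det = 1) :
    ∃ L : List (Matrix (Fin n) (Fin n) w.Ap),
      (∀ E ∈ L, ∃ (i j : Fin n) (c : w.Ap), i ≠ j ∧ E = Matrix.transvection i j c) ∧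
      L.prod = M :=
  Submonoid.exists_list_of_mem_closure <| Matrix.mem_elementary_of_det_eq_one
    (BoundedContinuousFunction.hasStableRangeOne.of_ringEquiv (GoodWeight.Ap.equivBounded w)) hM

/-- `SL_n(A(p)) = E_n(A(p))`: every matrix over `A(p)` of determinant `1 = ε`
is a finite product of elementary matrices (transvections `I + α e_{ij}`, `i ≠ j`). -/
theorem sl_eq_elementary (w : GoodWeight) (hg : w.Grows) (n : ℕ)
    (M : Matrix (Fin n) (Fin n) w.Ap) (hM : M.det = 1) :
    ∃ L : List (Matrix (Fin n) (Fin n) w.Ap),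
      (∀ E ∈ L, ∃ (i j : Fin n) (c : w.Ap), i ≠ j ∧ E = Matrix.transvection i j c) ∧
      L.prod = M :=
  sl_eq_elementary_general w n M hM
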